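/- Let G be a finite abelian group. For generating symbols (H, Y, β)' and (H', Y', β')' of BC'_*(G), define their product by (H, Y, β)' ×̃ (H', Y', β')' = Ψ(Φ((H, Y, β)') × Φ((H', Y', β')')), where × is the product on BC_*(G) given on symbols by (H₁, Y₁, β₁) × (H₂, Y₂, β₂) = (H₁ ∩ H₂, Y₁ ∩ Y₂, (β₁ ∪ β₂)|_{H₁ ∩ H₂}). Then (H, Y, β)' ×̃ (H', Y', β')' = 0 if H ≠ H', and equals (H, Y ∩ Y', β ∪ β')' if H = H'. -/

import Mathlib

/-!
Expanding `Φ` on both factors and `Ψ` on their product, every term is a restriction of the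
single element `(H ∩ H', Y ∩ Y', β|_{H ∩ H'} ∪ β'|_{H ∩ H'})` to a subgroup `L ⊆ H ∩ H'`, and
its coefficient is `(∑_{L ⊆ K ⊆ H} μ(K, H)) (∑_{L ⊆ K' ⊆ H'} μ(K', H')) = δ_{L,H} δ_{L,H'}`.
Validity of the symbols involved is never an issue: a restriction in which some character becomes
trivial is zero, and restricted characters still generate because `ℂ^×` is divisible, so
characters of a subgroup extend.
-/

open scoped Classical

noncomputable section

namespace CBG

/-- The character group `A^∨ = Hom(A, ℂ^×)` of a group `A`, written additively. -/
abbrev Ch (A : Type*) [Group A] : Type _ := Additive (A →* ℂˣ)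

/-- A multiset of characters generates the character group. -/
def gens {A : Type*} [Group A] (β : Multiset (Ch A)) : Prop :=
  AddSubgroup.closure {b | b ∈ β} = ⊤

variable (G : Type*) [Group G]

/-- Generating symbols `(H, Y, β)` of the combinatorial symbols group `SC_n(G)`:
`H ⊆ G` abelian, `H ⊆ Y ⊆ Z_G(H)`, and `β` a multiset (= sequence modulo the
reordering relation (O)) of nontrivial characters of `H`, of length `1 ≤ r ≤ n`,
generating `H^∨`. -/
structure Symbol (n : ℕ) where
  H : Subgroup G
  Y : Subgroup G
  habelian : IsMulCommutative H
  hHY : H ≤ Y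
  hYC : Y ≤ Subgroup.centralizer (H : Set G)
  β : Multiset (Ch H)
  hcard₁ : 1 ≤ Multiset.card β
  hcard₂ : Multiset.card β ≤ n
  hne : ∀ b ∈ β, b ≠ 0
  hgen : gens β

/-- The combinatorial symbols group `SC_n(G)`: the free `ℤ`-module on the symbols. -/
abbrev SC (n : ℕ) : Type _ := Symbol G n →₀ ℤ

/-- The symbol `(H, Y, β)` as an element of `SC_n(G)`, with the convention that
an invalid symbol (in particular, one whose character sequence contains the
trivial character) is `0`. -/
def mkSC (n : ℕ) (H Y : Subgroup G) (β : Multiset (Ch H)) : SC G n :=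
  if h : IsMulCommutative H ∧ H ≤ Y ∧ Y ≤ Subgroup.centralizer (H : Set G) ∧
      1 ≤ Multiset.card β ∧ Multiset.card β ≤ n ∧ (∀ b ∈ β, b ≠ 0) ∧ gens β then
    Finsupp.single ⟨H, Y, h.1, h.2.1, h.2.2.1, β, h.2.2.2.1, h.2.2.2.2.1,
      h.2.2.2.2.2.1, h.2.2.2.2.2.2⟩ 1
  else 0

/-- Restriction of a character to a smaller subgroup. -/
def resCh {H K : Subgroup G} (h : K ≤ H) (b : Ch H) : Ch K :=
  Additive.ofMul ((Additive.toMul b).comp (Subgroup.inclusion h))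

/-- The conjugate subgroup `gHg⁻¹`. -/
def conjSub (g : G) (H : Subgroup G) : Subgroup G :=
  Subgroup.map (MulAut.conj g : G ≃* G) H

/-- Transport of a character of `H` to a character of `K = gHg⁻¹` along conjugation by `g`. -/
def conjChTo {H K : Subgroup G} (g : G) (hK : conjSub G g H = K) (b : Ch H) : Ch K :=
  Additive.ofMul ((Additive.toMul b).comp
    (((MulEquiv.subgroupMap (MulAut.conj g : G ≃* G) H).trans
      (MulEquiv.subgroupCongr hK)).symm.toMonoidHom))

/-- Relation (C): conjugation. -/
def relC (n : ℕ) : Set (SC G n) :=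
  {x | ∃ (s : Symbol G n) (g : G),
    x = Finsupp.single s 1 -
        mkSC G n (conjSub G g s.H) (conjSub G g s.Y) (s.β.map (conjChTo G g rfl))}

/-- Relation (V): vanishing. -/
def relV (n : ℕ) : Set (SC G n) :=
  {x | ∃ s : Symbol G n,
    (s.H = ⊥ ∨ ∃ (b₁ b₂ : Ch s.H) (rest : Multiset (Ch s.H)),
      s.β = b₁ ::ₘ b₂ ::ₘ rest ∧ b₁ + b₂ = 0) ∧
    x = Finsupp.single s 1}

/-- Relation (B2): blowup. -/
def relB2 (n : ℕ) : Set (SC G n) :=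
  {x | ∃ (s : Symbol G n) (b₁ b₂ : Ch s.H) (rest : Multiset (Ch s.H)),
    s.β = b₁ ::ₘ b₂ ::ₘ rest ∧
    ((b₁ = b₂ ∧ x = Finsupp.single s 1 - mkSC G n s.H s.Y (b₂ ::ₘ rest)) ∨
     (b₁ ≠ b₂ ∧ (∃ b ∈ s.β, b ∈ AddSubgroup.zmultiples (b₁ - b₂)) ∧
        x = Finsupp.single s 1 - mkSC G n s.H s.Y ((b₁ - b₂) ::ₘ b₂ ::ₘ rest)
            - mkSC G n s.H s.Y (b₁ ::ₘ (b₂ - b₁) ::ₘ rest)) ∨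
     (b₁ ≠ b₂ ∧ ¬(∃ b ∈ s.β, b ∈ AddSubgroup.zmultiples (b₁ - b₂)) ∧
        x = Finsupp.single s 1 - mkSC G n s.H s.Y ((b₁ - b₂) ::ₘ b₂ ::ₘ rest)
            - mkSC G n s.H s.Y (b₁ ::ₘ (b₂ - b₁) ::ₘ rest)
            - mkSC G n (Subgroup.map s.H.subtype (MonoidHom.ker (Additive.toMul (b₁ - b₂))))
                s.Y (s.β.map (resCh G (Subgroup.map_subtype_le _)))))}

/-- Relation (B2'): modified blowup. -/
def relB2' (n : ℕ) : Set (SC G n) :=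
  {x | ∃ (s : Symbol G n) (b₁ b₂ : Ch s.H) (rest : Multiset (Ch s.H)),
    s.β = b₁ ::ₘ b₂ ::ₘ rest ∧
    ((b₁ = b₂ ∧ x = Finsupp.single s 1 - mkSC G n s.H s.Y (b₂ ::ₘ rest)) ∨
     (b₁ ≠ b₂ ∧
        x = Finsupp.single s 1 - mkSC G n s.H s.Y ((b₁ - b₂) ::ₘ b₂ ::ₘ rest)
            - mkSC G n s.H s.Y (b₁ ::ₘ (b₂ - b₁) ::ₘ rest)))}

/-- The combinatorial Burnside group `BC_n(G)`. -/
abbrev BC (n : ℕ) : Type _ :=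
  SC G n ⧸ Submodule.span ℤ (relC G n ∪ relV G n ∪ relB2 G n)

/-- The group `BC'_n(G)`. -/
abbrev BC' (n : ℕ) : Type _ :=
  SC G n ⧸ Submodule.span ℤ (relC G n ∪ relV G n ∪ relB2' G n)

/-- Projection `SC_n(G) → BC_n(G)`. -/
def BCmk (n : ℕ) : SC G n →ₗ[ℤ] BC G n :=
  Submodule.mkQ _

/-- Projection `SC_n(G) → BC'_n(G)`. -/
def BC'mk (n : ℕ) : SC G n →ₗ[ℤ] BC' G n :=
  Submodule.mkQ _

/-- Generators of the symbols group `S_n(A)` of a (finite abelian) group `A`: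
`n`-tuples (modulo reordering, i.e. multisets of size `n`) of characters of `A`
generating `A^∨`. -/
def BGen (A : Type*) [Group A] (n : ℕ) : Type _ :=
  {β : Multiset (Ch A) // Multiset.card β = n ∧ gens β}

/-- The symbols group `S_n(A)`. -/
abbrev SB (A : Type*) [Group A] (n : ℕ) : Type _ := BGen A n →₀ ℤ

/-- A tuple of characters as an element of `S_n(A)` (zero if not a valid generator). -/
def mkSB (A : Type*) [Group A] (n : ℕ) (β : Multiset (Ch A)) : SB A n :=
  if h : Multiset.card β = n ∧ gens β then Finsupp.single ⟨β, h⟩ 1 else 0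

/-- The blowup relation (B). -/
def relB (A : Type*) [Group A] (n : ℕ) : Set (SB A n) :=
  {x | ∃ (β : BGen A n) (b₁ b₂ : Ch A) (rest : Multiset (Ch A)),
    β.1 = b₁ ::ₘ b₂ ::ₘ rest ∧
    x = Finsupp.single β 1 - mkSB A n ((b₁ - b₂) ::ₘ b₂ ::ₘ rest)
        - mkSB A n (b₁ ::ₘ (b₂ - b₁) ::ₘ rest)}

/-- The group `B_n(A)`: quotient of `S_n(A)` by the blowup relation (B). -/
abbrev Bgrp (A : Type*) [Group A] (n : ℕ) : Type _ :=
  SB A n ⧸ Submodule.span ℤ (relB A n)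

variable (G : Type*) [Group G]

/-- Conjugation by an element of the normalizer of `H`, as a homomorphism `H →* H`. -/
def normConj (H : Subgroup G) (g : G) (hg : g ∈ Subgroup.normalizer (H : Set G)) : H →* H where
  toFun x := ⟨g * x * g⁻¹, (Subgroup.mem_normalizer_iff.mp hg x).1 x.2⟩
  map_one' := by ext; simp
  map_mul' x y := by
    ext
    push_cast
    group

/-- The conjugation action of an element of the normalizer of `H` on characters of `H`. -/
def chConjN (H : Subgroup G) (g : G) (hg : g ∈ Subgroup.normalizer (H : Set G)) (b : Ch H) : Ch H :=
  Additive.ofMul ((Additive.toMul b).comp (normConj G H g hg))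

/-- The relation `(C_{(H,Y)})`: `β = β^g` for all `g ∈ N_G(H) ∩ N_G(Y)`. -/
def relCHY (H Y : Subgroup G) (n : ℕ) : Set (SB H n) :=
  {x | ∃ (β : BGen H n) (g : G) (hg : g ∈ Subgroup.normalizer (H : Set G)) (_ : g ∈ Subgroup.normalizer (Y : Set G)),
    x = Finsupp.single β 1 - mkSB H n (β.1.map (chConjN G H g hg))}

/-- The group `B_n(H)/(C_{(H,Y)})`. -/
abbrev BnC (H Y : Subgroup G) (n : ℕ) : Type _ :=
  SB H n ⧸ Submodule.span ℤ (relB H n ∪ relCHY G H Y n)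


end CBG

namespace CBG

variable (G : Type*) [Group G]

/-- The restriction of a symbol `s = (H, Y, β)` to a subgroup `K ⊆ H`, as an element
of `SC_n(G)` (a symbol whose character sequence contains the trivial character being
zero, and `0` if `K ⊄ H`). -/
def resSC (n : ℕ) (s : Symbol G n) (K : Subgroup G) : SC G n :=
  if h : K ≤ s.H then mkSC G n K s.Y (s.β.map (resCh G h)) else 0

/-- Transport of characters along an equality of subgroups. -/
def castCh {H K : Subgroup G} (h : H = K) (b : Ch H) : Ch K :=
  Additive.ofMul ((Additive.toMul b).comp (MulEquiv.subgroupCongr h).symm.toMonoidHom)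

end CBG

open CBG

open Finset

section Moebius

theorem sum_Icc_moebius_eq_ite {α : Type*} [PartialOrder α] [Fintype α] {μ : α → α → ℤ}
    (hμ_self : ∀ a, μ a a = 1) (hμ_not_le : ∀ a b, ¬ a ≤ b → μ a b = 0)
    (hμ_rec : ∀ a b, a < b → μ a b = -∑ z ∈ univ.filter (fun z => a ≤ z ∧ z < b), μ a z)
    (a b : α) :
    ∑ x ∈ univ.filter (fun x => a ≤ x ∧ x ≤ b), μ x b = if a = b then 1 else 0 := by
  let := Fintype.toLocallyFiniteOrder (α := α)
  have hμ_eq_mu : ∀ a b, μ a b = IncidenceAlgebra.mu ℤ a b := by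
    intro a b
    induction b using WellFoundedLT.induction with
    | _ b ih =>
      by_cases hab : a ≤ b
      · rcases hab.eq_or_lt with rfl | hlt
        · simp [hμ_self]
        · rw [hμ_rec a b hlt, IncidenceAlgebra.mu_eq_neg_sum_Ico_of_ne hlt.ne]
          have hIco : univ.filter (fun z => a ≤ z ∧ z < b) = Ico a b := by ext; simp
          rw [hIco]
          exact congrArg Neg.neg (sum_congr rfl fun z hz => ih z (mem_Ico.mp hz).2)
      · rw [hμ_not_le a b hab, IncidenceAlgebra.apply_eq_zero_of_not_le hab]
  have hIcc : univ.filter (fun x => a ≤ x ∧ x ≤ b) = Icc a b := by ext; simp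
  simp_rw [hIcc, hμ_eq_mu]
  exact IncidenceAlgebra.sum_Icc_mu_left a b

variable {α M : Type*} [Fintype α] [AddCommGroup M] {μ : α → α → ℤ}

theorem sum_moebius_smul_sum_le [Preorder α]
    (hμ : ∀ a b, ∑ x ∈ univ.filter (fun x => a ≤ x ∧ x ≤ b), μ x b = if a = b then 1 else 0)
    (g : α → M) (a : α) :
    ∑ x ∈ univ.filter (· ≤ a), μ x a • ∑ z ∈ univ.filter (· ≤ x), g z = g a := by
  calc ∑ x ∈ univ.filter (· ≤ a), μ x a • ∑ z ∈ univ.filter (· ≤ x), g z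
      = ∑ x ∈ univ.filter (· ≤ a), ∑ z ∈ univ.filter (· ≤ x), μ x a • g z := by
        simp_rw [smul_sum]
    _ = ∑ z, ∑ x ∈ univ.filter (fun x => z ≤ x ∧ x ≤ a), μ x a • g z :=
        sum_comm' fun x z => by simp only [mem_filter, mem_univ, true_and]; tauto
    _ = ∑ z, (if z = a then 1 else 0 : ℤ) • g z := by simp_rw [← sum_smul, hμ]
    _ = g a := by simp

theorem sum_moebius_smul_sum_moebius_smul_sum_inf [Lattice α]
    (hμ : ∀ a b, ∑ x ∈ univ.filter (fun x => a ≤ x ∧ x ≤ b), μ x b = if a = b then 1 else 0)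
    (f : α → M) (a b : α) :
    ∑ x ∈ univ.filter (· ≤ a), μ x a • ∑ y ∈ univ.filter (· ≤ b), μ y b •
      ∑ z ∈ univ.filter (· ≤ x ⊓ y), f z = if a = b then f a else 0 := by
  have hinner : ∀ x, ∑ y ∈ univ.filter (· ≤ b), μ y b • ∑ z ∈ univ.filter (· ≤ x ⊓ y), f z =
      ∑ z ∈ univ.filter (· ≤ x), if z = b then f b else 0 := by
    intro x
    simp only [sum_ite_eq', mem_filter, mem_univ, true_and]
    rw [← sum_moebius_smul_sum_le hμ (fun z => if z ≤ x then f z else 0) b]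
    refine sum_congr rfl fun y _ => ?_
    rw [← sum_filter, filter_filter]
    simp only [le_inf_iff, and_comm]
  simp_rw [hinner, sum_moebius_smul_sum_le hμ]
  split_ifs with h <;> simp [h]

end Moebius

theorem Units.exists_zpow_eq_of_isAlgClosed {K : Type*} [Field K] [IsAlgClosed K] {n : ℤ}
    (hn : n ≠ 0) (x : Kˣ) : ∃ z : Kˣ, z ^ n = x := by
  obtain ⟨z, hz⟩ := IsAlgClosed.exists_pow_nat_eq (x : K) (Int.natAbs_pos.mpr hn)
  have hz0 : z ≠ 0 := by
    rintro rfl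
    exact x.ne_zero (by rw [← hz, zero_pow (Int.natAbs_ne_zero.mpr hn)])
  have hpow : Units.mk0 z hz0 ^ n.natAbs = x := Units.ext (by simpa using hz)
  rcases Int.natAbs_eq n with hn' | hn'
  · exact ⟨Units.mk0 z hz0, by rw [hn', zpow_natCast, hpow]⟩
  · exact ⟨(Units.mk0 z hz0)⁻¹, by rw [hn', inv_zpow', neg_neg, zpow_natCast, hpow]⟩

noncomputable instance {K : Type*} [Field K] [IsAlgClosed K] : DivisibleBy (Additive Kˣ) ℤ :=
  divisibleByOfSMulRightSurj _ _ fun hn x => by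
    obtain ⟨z, hz⟩ := Units.exists_zpow_eq_of_isAlgClosed hn x.toMul
    exact ⟨Additive.ofMul z, congrArg Additive.ofMul hz⟩

namespace CBG

variable {G : Type*} [CommGroup G]

theorem Ch.ext {H : Subgroup G} {b b' : Ch H}
    (h : ∀ x, Additive.toMul b x = Additive.toMul b' x) : b = b' :=
  Additive.toMul.injective (MonoidHom.ext h)

@[simps]
def resChHom {H K : Subgroup G} (h : K ≤ H) : Ch H →+ Ch K where
  toFun := resCh G h
  map_zero' := rfl
  map_add' _ _ := rfl

theorem resCh_zero {H K : Subgroup G} (h : K ≤ H) : resCh G h 0 = 0 :=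
  rfl

theorem map_resCh_self {H : Subgroup G} (h : H ≤ H) (β : Multiset (Ch H)) :
    β.map (resCh G h) = β :=
  Multiset.map_id' β

theorem resCh_eq_castCh {H K : Subgroup G} (e : K = H) (h : H ≤ K) : resCh G h = castCh G e :=
  rfl

theorem map_resCh_map_resCh {H K L : Subgroup G} (h₁ : K ≤ H) (h₂ : L ≤ K) (β : Multiset (Ch H)) :
    (β.map (resCh G h₁)).map (resCh G h₂) = β.map (resCh G (h₂.trans h₁)) :=
  Multiset.map_map _ _ _

theorem resCh_surjective {H K : Subgroup G} (h : K ≤ H) : Function.Surjective (resCh G h) := by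
  intro b
  obtain ⟨F, hF⟩ := (Module.Baer.of_divisible (Additive ℂˣ)).extension_property_addMonoidHom
    (Subgroup.inclusion h).toAdditive (Subgroup.inclusion_injective h) (Additive.toMul b).toAdditive
  exact ⟨Additive.ofMul (MonoidHom.toAdditive.symm F),
    Ch.ext fun x => congrArg Additive.toMul (DFunLike.congr_fun hF (Additive.ofMul x))⟩

theorem gens_map_resCh {H K : Subgroup G} (h : K ≤ H) {β : Multiset (Ch H)} (hβ : gens β) :
    gens (β.map (resCh G h)) := by
  have himage : {c | c ∈ β.map (resCh G h)} = resChHom h '' {b | b ∈ β} := by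
    ext; simp
  have hmap := AddMonoidHom.map_closure (N := Ch K) (resChHom h) {b | b ∈ β}
  rw [hβ, ← AddMonoidHom.range_eq_map,
    AddMonoidHom.range_eq_top_of_surjective _ (resCh_surjective h)] at hmap
  rw [gens, himage]
  exact hmap.symm

theorem gens_add_right {H : Subgroup G} {β : Multiset (Ch H)} (hβ : gens β) (β' : Multiset (Ch H)) :
    gens (β + β') :=
  eq_top_mono (AddSubgroup.closure_mono fun _ hb => Multiset.mem_add.mpr (Or.inl hb)) hβ

theorem mkSC_eq_zero_of_zero_mem {m : ℕ} {H : Subgroup G} (Y : Subgroup G) {β : Multiset (Ch H)}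
    (h0 : 0 ∈ β) : mkSC G m H Y β = 0 :=
  dif_neg fun h => h.2.2.2.2.2.1 0 h0 rfl

theorem zero_mem_map_resCh {H K : Subgroup G} (h : K ≤ H) {β : Multiset (Ch H)} (h0 : 0 ∈ β) :
    0 ∈ β.map (resCh G h) :=
  Multiset.mem_map.mpr ⟨0, h0, resCh_zero h⟩

/-- The conditions on a symbol `(K, Y, γ)` of `SC_m(G)` other than the nontriviality of the
characters; that `K` is abelian and `Y ≤ Z_G(K)` is automatic in an abelian `G`. -/
structure IsPreSymbol (m : ℕ) (K Y : Subgroup G) (γ : Multiset (Ch K)) : Prop where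
  le : K ≤ Y
  one_le_card : 1 ≤ Multiset.card γ
  card_le : Multiset.card γ ≤ m
  gens : gens γ

variable {m n n' : ℕ} {K K' L Y Y' : Subgroup G} {γ : Multiset (Ch K)} {γ' : Multiset (Ch K')}

theorem Symbol.isPreSymbol (s : Symbol G m) : IsPreSymbol m s.H s.Y s.β :=
  ⟨s.hHY, s.hcard₁, s.hcard₂, s.hgen⟩

theorem IsPreSymbol.map_resCh (h : IsPreSymbol m K Y γ) (hL : L ≤ K) :
    IsPreSymbol m L Y (γ.map (resCh G hL)) :=
  ⟨hL.trans h.le, (Multiset.card_map _ _).symm ▸ h.one_le_card,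
    (Multiset.card_map _ _).symm ▸ h.card_le, gens_map_resCh hL h.gens⟩

theorem IsPreSymbol.inf (h : IsPreSymbol n K Y γ) (h' : IsPreSymbol n' K' Y' γ') :
    IsPreSymbol (n + n') (K ⊓ K') (Y ⊓ Y')
      (γ.map (resCh G inf_le_left) + γ'.map (resCh G inf_le_right)) := by
  refine ⟨inf_le_inf h.le h'.le, ?_, ?_, gens_add_right (gens_map_resCh _ h.gens) _⟩ <;>
  · have := h.one_le_card; have := h.card_le; have := h'.card_le
    simp only [Multiset.card_add, Multiset.card_map]
    omega

def IsPreSymbol.toSymbol (h : IsPreSymbol m K Y γ) (h0 : (0 : Ch K) ∉ γ) : Symbol G m :=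
  ⟨K, Y, inferInstance, h.le, fun y _ => Subgroup.mem_centralizer_iff.mpr fun x _ => mul_comm x y,
    γ, h.one_le_card, h.card_le, fun _ hb hb0 => h0 (hb0 ▸ hb), h.gens⟩

theorem IsPreSymbol.mkSC_eq (h : IsPreSymbol m K Y γ) (h0 : (0 : Ch K) ∉ γ) :
    mkSC G m K Y γ = Finsupp.single (h.toSymbol h0) 1 :=
  dif_pos ⟨(h.toSymbol h0).habelian, (h.toSymbol h0).hHY, (h.toSymbol h0).hYC, h.one_le_card,
    h.card_le, (h.toSymbol h0).hne, h.gens⟩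

variable (G) in
def resMkSC (m : ℕ) (K Y : Subgroup G) (γ : Multiset (Ch K)) (L : Subgroup G) : SC G m :=
  if h : L ≤ K then mkSC G m L Y (γ.map (resCh G h)) else 0

theorem apply_mkSC_mkSC {P : SC G n →ₗ[ℤ] SC G n' →ₗ[ℤ] SC G (n + n')}
    (hP : ∀ (s : Symbol G n) (s' : Symbol G n'),
      P (Finsupp.single s 1) (Finsupp.single s' 1) =
        mkSC G (n + n') (s.H ⊓ s'.H) (s.Y ⊓ s'.Y)
          (s.β.map (resCh G inf_le_left) + s'.β.map (resCh G inf_le_right)))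
    (h : IsPreSymbol n K Y γ) (h' : IsPreSymbol n' K' Y' γ') :
    P (mkSC G n K Y γ) (mkSC G n' K' Y' γ') =
      mkSC G (n + n') (K ⊓ K') (Y ⊓ Y')
        (γ.map (resCh G inf_le_left) + γ'.map (resCh G inf_le_right)) := by
  by_cases h0 : (0 : Ch K) ∈ γ
  · rw [mkSC_eq_zero_of_zero_mem Y h0, map_zero, LinearMap.zero_apply]
    exact (mkSC_eq_zero_of_zero_mem _
      (Multiset.mem_add.mpr (Or.inl (zero_mem_map_resCh _ h0)))).symm
  by_cases h0' : (0 : Ch K') ∈ γ'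
  · rw [mkSC_eq_zero_of_zero_mem Y' h0', map_zero]
    exact (mkSC_eq_zero_of_zero_mem _
      (Multiset.mem_add.mpr (Or.inr (zero_mem_map_resCh _ h0')))).symm
  rw [h.mkSC_eq h0, h'.mkSC_eq h0', hP]
  rfl

variable [Fintype (Subgroup G)]

theorem map_mkSC_eq_sum_resMkSC {Ψ : SC G m →ₗ[ℤ] SC G m}
    (hΨ : ∀ s : Symbol G m, Ψ (Finsupp.single s 1) =
      ∑ K ∈ univ.filter (fun K : Subgroup G => K ≤ s.H), resSC G m s K)
    (h : IsPreSymbol m K Y γ) :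
    Ψ (mkSC G m K Y γ) = ∑ L ∈ univ.filter (· ≤ K), resMkSC G m K Y γ L := by
  by_cases h0 : (0 : Ch K) ∈ γ
  · rw [mkSC_eq_zero_of_zero_mem Y h0, map_zero]
    refine (sum_eq_zero fun L hL => ?_).symm
    rw [resMkSC, dif_pos (mem_filter.mp hL).2]
    exact mkSC_eq_zero_of_zero_mem Y (zero_mem_map_resCh _ h0)
  · rw [h.mkSC_eq h0, hΨ]
    rfl

theorem map_apply_resSC_resSC {Ψ : SC G (n + n') →ₗ[ℤ] SC G (n + n')}
    {P : SC G n →ₗ[ℤ] SC G n' →ₗ[ℤ] SC G (n + n')}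
    (hΨ : ∀ s : Symbol G (n + n'), Ψ (Finsupp.single s 1) =
      ∑ K ∈ univ.filter (fun K : Subgroup G => K ≤ s.H), resSC G (n + n') s K)
    (hP : ∀ (s : Symbol G n) (s' : Symbol G n'),
      P (Finsupp.single s 1) (Finsupp.single s' 1) =
        mkSC G (n + n') (s.H ⊓ s'.H) (s.Y ⊓ s'.Y)
          (s.β.map (resCh G inf_le_left) + s'.β.map (resCh G inf_le_right)))
    (s : Symbol G n) (s' : Symbol G n') (hK : K ≤ s.H) (hK' : K' ≤ s'.H) :
    Ψ (P (resSC G n s K) (resSC G n' s' K')) =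
      ∑ L ∈ univ.filter (· ≤ K ⊓ K'), resMkSC G (n + n') (s.H ⊓ s'.H) (s.Y ⊓ s'.Y)
        (s.β.map (resCh G inf_le_left) + s'.β.map (resCh G inf_le_right)) L := by
  have hs := s.isPreSymbol.map_resCh hK
  have hs' := s'.isPreSymbol.map_resCh hK'
  rw [resSC, dif_pos hK, resSC, dif_pos hK', apply_mkSC_mkSC hP hs hs',
    map_mkSC_eq_sum_resMkSC hΨ (hs.inf hs')]
  refine sum_congr rfl fun L hL => ?_
  have hL : L ≤ K ⊓ K' := (mem_filter.mp hL).2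
  rw [resMkSC, resMkSC, dif_pos hL, dif_pos (hL.trans (inf_le_inf hK hK'))]
  simp only [Multiset.map_add, map_resCh_map_resCh]

end CBG

open scoped Classical in
theorem BC'_product_formula_general
    (G : Type*) [CommGroup G] [Fintype (Subgroup G)]
    (n n' : ℕ)
    (μ : Subgroup G → Subgroup G → ℤ)
    (hμ_self : ∀ H : Subgroup G, μ H H = 1)
    (hμ_not_le : ∀ H K : Subgroup G, ¬ H ≤ K → μ H K = 0)
    (hμ_rec : ∀ H K : Subgroup G, H < K →
      μ H K = -∑ Z ∈ Finset.univ.filter (fun Z : Subgroup G => H ≤ Z ∧ Z < K), μ H Z)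
    (Φ₁ : SC G n →ₗ[ℤ] SC G n) (Φ₂ : SC G n' →ₗ[ℤ] SC G n')
    (Ψ : SC G (n + n') →ₗ[ℤ] SC G (n + n'))
    (hΦ₁ : ∀ s : Symbol G n, Φ₁ (Finsupp.single s 1) =
      ∑ K ∈ Finset.univ.filter (fun K : Subgroup G => K ≤ s.H), μ K s.H • resSC G n s K)
    (hΦ₂ : ∀ s : Symbol G n', Φ₂ (Finsupp.single s 1) =
      ∑ K ∈ Finset.univ.filter (fun K : Subgroup G => K ≤ s.H), μ K s.H • resSC G n' s K)
    (hΨ : ∀ s : Symbol G (n + n'), Ψ (Finsupp.single s 1) =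
      ∑ K ∈ Finset.univ.filter (fun K : Subgroup G => K ≤ s.H), resSC G (n + n') s K)
    (P : SC G n →ₗ[ℤ] SC G n' →ₗ[ℤ] SC G (n + n'))
    (hP : ∀ (s : Symbol G n) (s' : Symbol G n'),
      P (Finsupp.single s 1) (Finsupp.single s' 1) =
        mkSC G (n + n') (s.H ⊓ s'.H) (s.Y ⊓ s'.Y)
          (s.β.map (resCh G inf_le_left) + s'.β.map (resCh G inf_le_right))) :
    ∀ (s : Symbol G n) (s' : Symbol G n'),
      BC'mk G (n + n') (Ψ (P (Φ₁ (Finsupp.single s 1)) (Φ₂ (Finsupp.single s' 1)))) =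
        if h : s.H = s'.H then
          BC'mk G (n + n')
            (mkSC G (n + n') s.H (s.Y ⊓ s'.Y) (s.β + s'.β.map (castCh G h.symm)))
        else 0 := by
  intro s s'
  set γ := s.β.map (resCh G inf_le_left) + s'.β.map (resCh G inf_le_right)
  have hexpand : Ψ (P (Φ₁ (Finsupp.single s 1)) (Φ₂ (Finsupp.single s' 1))) =
      ∑ K ∈ univ.filter (· ≤ s.H), μ K s.H • ∑ K' ∈ univ.filter (· ≤ s'.H), μ K' s'.H •
        ∑ L ∈ univ.filter (· ≤ K ⊓ K'), resMkSC G (n + n') (s.H ⊓ s'.H) (s.Y ⊓ s'.Y) γ L := by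
    rw [hΦ₁, hΦ₂, map_sum P, LinearMap.sum_apply, map_sum Ψ]
    refine sum_congr rfl fun K hK => ?_
    rw [map_smul, LinearMap.smul_apply, map_smul, map_sum, map_sum]
    congr 1
    refine sum_congr rfl fun K' hK' => ?_
    rw [map_smul, map_smul,
      map_apply_resSC_resSC hΨ hP s s' (mem_filter.mp hK).2 (mem_filter.mp hK').2]
  rw [hexpand, sum_moebius_smul_sum_moebius_smul_sum_inf
    (sum_Icc_moebius_eq_ite hμ_self hμ_not_le hμ_rec)]
  split_ifs with h
  · rw [resMkSC, dif_pos (le_inf le_rfl h.le)]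
    simp only [γ, Multiset.map_add, map_resCh_map_resCh, map_resCh_self, resCh_eq_castCh h.symm]
  · exact map_zero _

open scoped Classical in
/-- Let `G` be a finite abelian group.  For generating symbols `(H,Y,β)'`, `(H',Y',β')'`
define `(H,Y,β)' ×̃ (H',Y',β')' = Ψ(Φ((H,Y,β)') × Φ((H',Y',β')'))`, where `×` is the
product on `BC_*(G)` given on symbols by
`(H₁,Y₁,β₁) × (H₂,Y₂,β₂) = (H₁ ∩ H₂, Y₁ ∩ Y₂, (β₁ ∪ β₂)|_{H₁ ∩ H₂})` and `Ψ`, `Φ` are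
the mutually inverse maps of Moebius inversion.  Then, in `BC'_{n+n'}(G)`, the product
`(H,Y,β)' ×̃ (H',Y',β')'` is `0` if `H ≠ H'`, and equals `(H, Y ∩ Y', β ∪ β')'` if
`H = H'`. -/
theorem BC'_product_formula
    (G : Type*) [CommGroup G] [Fintype G] [Fintype (Subgroup G)]
    (n n' : ℕ) (hn : 1 ≤ n) (hn' : 1 ≤ n')
    (μ : Subgroup G → Subgroup G → ℤ)
    (hμ_self : ∀ H : Subgroup G, μ H H = 1)
    (hμ_not_le : ∀ H K : Subgroup G, ¬ H ≤ K → μ H K = 0)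
    (hμ_rec : ∀ H K : Subgroup G, H < K →
      μ H K = -∑ Z ∈ Finset.univ.filter (fun Z : Subgroup G => H ≤ Z ∧ Z < K), μ H Z)
    (Φ₁ : SC G n →ₗ[ℤ] SC G n) (Φ₂ : SC G n' →ₗ[ℤ] SC G n')
    (Ψ : SC G (n + n') →ₗ[ℤ] SC G (n + n'))
    (hΦ₁ : ∀ s : Symbol G n, Φ₁ (Finsupp.single s 1) =
      ∑ K ∈ Finset.univ.filter (fun K : Subgroup G => K ≤ s.H), μ K s.H • resSC G n s K)
    (hΦ₂ : ∀ s : Symbol G n', Φ₂ (Finsupp.single s 1) =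
      ∑ K ∈ Finset.univ.filter (fun K : Subgroup G => K ≤ s.H), μ K s.H • resSC G n' s K)
    (hΨ : ∀ s : Symbol G (n + n'), Ψ (Finsupp.single s 1) =
      ∑ K ∈ Finset.univ.filter (fun K : Subgroup G => K ≤ s.H), resSC G (n + n') s K)
    (P : SC G n →ₗ[ℤ] SC G n' →ₗ[ℤ] SC G (n + n'))
    (hP : ∀ (s : Symbol G n) (s' : Symbol G n'),
      P (Finsupp.single s 1) (Finsupp.single s' 1) =
        mkSC G (n + n') (s.H ⊓ s'.H) (s.Y ⊓ s'.Y)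
          (s.β.map (resCh G inf_le_left) + s'.β.map (resCh G inf_le_right))) :
    ∀ (s : Symbol G n) (s' : Symbol G n'),
      BC'mk G (n + n') (Ψ (P (Φ₁ (Finsupp.single s 1)) (Φ₂ (Finsupp.single s' 1)))) =
        if h : s.H = s'.H then
          BC'mk G (n + n')
            (mkSC G (n + n') s.H (s.Y ⊓ s'.Y) (s.β + s'.β.map (castCh G h.symm)))
        else 0 :=
  BC'_product_formula_general G n n' μ hμ_self hμ_not_le hμ_rec Φ₁ Φ₂ Ψ hΦ₁ hΦ₂ hΨ P hP
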